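/- Let γ : Z_n → ℕ and i ∈ {1,…,n}, and let −^a +^b be the reduced i-signature of γ. Then the reduced i-signature of γ^{i,+} has exactly a + 1 symbols '−'; and if a > 0, the reduced i-signature of γ^{i,−} has exactly a − 1 symbols '−'. (That is, the combinatorial operators f̃_i and ẽ_i change ε_i by +1 and −1 respectively.) -/

import Mathlib

/-!
STATEMENT 17: For γ : Z_n → ℕ and i ∈ {1,…,n}, with reduced i-signature
−^a +^b: the reduced i-signature of γ^{i,+} has exactly a + 1 symbols "−",
and if a > 0, the reduced i-signature of γ^{i,−} has exactly a − 1 symbols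
"−".  (The combinatorial operators f̃_i and ẽ_i change ε_i by +1 and −1.
Functions on Z_n = {(k,l) : 1 ≤ k ≤ l ≤ n} are encoded as functions
γ : ℤ × ℤ → ℕ supported on Z_n.)
-/


/-- The two-letter alphabet {+,−}. -/
inductive Sign : Type
  | plus : Sign
  | minus : Sign
deriving DecidableEq

/-- Repeatedly delete adjacent pairs "+−" until none remain, producing the
reduced word −^a +^b (processing the word from the right). -/
def sigReduce : List Sign → List Sign
  | [] => []
  | s :: w =>
    let t := sigReduce w
    if s = Sign.plus ∧ t.head? = some Sign.minus then t.tail else s :: t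

/-- The block of the i-signature word contributed by the pairs (k,i) and
(k,i−1): γ(k,i) symbols '−' followed by γ(k,i−1) symbols '+'. -/
def sigBlock (γ : ℤ × ℤ → ℕ) (i k : ℤ) : List Sign :=
  List.replicate (γ (k, i)) Sign.minus ++ List.replicate (γ (k, i - 1)) Sign.plus

/-- The i-signature word w_i(γ): the blocks for k = 1, …, i listed in
increasing order of k. -/
def sigWord (γ : ℤ × ℤ → ℕ) (i : ℤ) : List Sign :=
  ((List.range i.toNat).map fun j => sigBlock γ i (1 + j)).flatten

/-- The part of the i-signature word consisting of the blocks k, k+1, …, i. -/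
def sigSuffix (γ : ℤ × ℤ → ℕ) (i k : ℤ) : List Sign :=
  ((List.range (i + 1 - k).toNat).map fun j => sigBlock γ i (k + j)).flatten

/-- The part of the i-signature word consisting of the blocks 1, …, k−1. -/
def sigPrefix (γ : ℤ × ℤ → ℕ) (i k : ℤ) : List Sign :=
  ((List.range (k - 1).toNat).map fun j => sigBlock γ i (1 + j)).flatten

/-- The number a of '−'s in the reduced i-signature −^a +^b of γ. -/
def aCount (γ : ℤ × ℤ → ℕ) (i : ℤ) : ℕ :=
  (sigReduce (sigWord γ i)).count Sign.minus

/-- The number b of '+'s in the reduced i-signature −^a +^b of γ. -/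
def bCount (γ : ℤ × ℤ → ℕ) (i : ℤ) : ℕ :=
  (sigReduce (sigWord γ i)).count Sign.plus

/-- The index k' such that the pair (k', i−1) contributes the leftmost
surviving '+' of the reduced i-signature of γ: a '+' from the block k survives
the cancellation precisely when γ(k,i−1) exceeds the number of '−'s in the
reduced word of the blocks k+1, …, i.  If there is no '+' in the reduced
i-signature, then k' = i. -/
noncomputable def kPlus (γ : ℤ × ℤ → ℕ) (i : ℤ) : ℤ :=
  let S := (Finset.Icc (1 : ℤ) (i - 1)).filter fun k =>
    (sigReduce (sigSuffix γ i (k + 1))).count Sign.minus < γ (k, i - 1)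
  if h : S.Nonempty then S.min' h else i

/-- The index k'' such that the pair (k'', i) contributes the rightmost
surviving '−' of the reduced i-signature of γ: a '−' from the block k survives
the cancellation precisely when γ(k,i) exceeds the number of '+'s in the
reduced word of the blocks 1, …, k−1.  (Meaningful when a > 0; otherwise the
value defaults to i.) -/
noncomputable def kMinus (γ : ℤ × ℤ → ℕ) (i : ℤ) : ℤ :=
  let S := (Finset.Icc (1 : ℤ) i).filter fun k =>
    (sigReduce (sigPrefix γ i k)).count Sign.plus < γ (k, i)
  if h : S.Nonempty then S.max' h else i

/-- The operator γ ↦ γ^{i,+}: add 1 at (k',i) and subtract 1 at (k',i−1),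
where (k',i−1) is the pair contributing the leftmost surviving '+' of the
reduced i-signature; if there is no such '+' then k' = i and only γ(i,i) is
increased by 1. -/
noncomputable def gammaPlus (γ : ℤ × ℤ → ℕ) (i : ℤ) : ℤ × ℤ → ℕ := fun p =>
  if p = (kPlus γ i, i) then γ p + 1
  else if kPlus γ i < i ∧ p = (kPlus γ i, i - 1) then γ p - 1
  else γ p

/-- The operator γ ↦ γ^{i,−} (defined when a > 0): subtract 1 at (k'',i) and
add 1 at (k'',i−1), where (k'',i) is the pair contributing the rightmost
surviving '−' of the reduced i-signature; if k'' = i then only γ(i,i) is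
decreased by 1. -/
noncomputable def gammaMinus (γ : ℤ × ℤ → ℕ) (i : ℤ) : ℤ × ℤ → ℕ := fun p =>
  if p = (kMinus γ i, i) then γ p - 1
  else if kMinus γ i < i ∧ p = (kMinus γ i, i - 1) then γ p + 1
  else γ p


/-!
Cancelling "+−" pairs makes the reduced signature a homomorphism to the bicyclic monoid: writing
(a, b) for the exponents of −^a +^b, the reduced signature of a concatenation u v has
a = a_u + (a_v − b_u) and b = b_v + (b_u − a_v).  The signature word is a concatenation of blocks
−^γ(k,i) +^γ(k,i−1), so everything reduces to this rule.

For γ^{i,+}, read the blocks from the right.  At the block k' the surviving '+' becomes a '−', which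
raises the number of '−' in the reduced suffix from k' by one; each block to the left of k' has
all its '+' cancelled by the '−' of its suffix (this is why k' is the leftmost surviving '+'), so
the extra '−' survives up to the whole word.  For γ^{i,−}, read from the left: the block k'' loses
its surviving '−' and each later block has all its '−' cancelled by the '+' of its prefix.
-/

/-- The exponents (a, b) of the reduced word −^a +^b. -/
def sigCounts : List Sign → ℕ × ℕ
  | [] => (0, 0)
  | Sign.minus :: w => ((sigCounts w).1 + 1, (sigCounts w).2)
  | Sign.plus :: w => ((sigCounts w).1 - 1, (sigCounts w).2 + (1 - (sigCounts w).1))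

theorem sigReduce_eq_replicate (w : List Sign) :
    sigReduce w =
      List.replicate (sigCounts w).1 Sign.minus ++ List.replicate (sigCounts w).2 Sign.plus := by
  induction w with
  | nil => rfl
  | cons s w ih =>
    rw [sigReduce, ih]
    rcases hw : sigCounts w with ⟨_ | a, _ | b⟩ <;> cases s <;>
      simp [sigCounts, hw, List.replicate_succ]

theorem count_minus_sigReduce (w : List Sign) :
    (sigReduce w).count Sign.minus = (sigCounts w).1 := by
  simp [sigReduce_eq_replicate, List.count_replicate]

theorem count_plus_sigReduce (w : List Sign) :
    (sigReduce w).count Sign.plus = (sigCounts w).2 := by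
  simp [sigReduce_eq_replicate, List.count_replicate]

theorem sigCounts_append (u v : List Sign) :
    sigCounts (u ++ v) =
      ((sigCounts u).1 + ((sigCounts v).1 - (sigCounts u).2),
        (sigCounts v).2 + ((sigCounts u).2 - (sigCounts v).1)) := by
  induction u with
  | nil => simp [sigCounts]
  | cons s u ih =>
    cases s <;> simp only [List.cons_append, sigCounts, ih] <;> ext <;> dsimp only <;> omega

theorem sigCounts_replicate_minus (n : ℕ) : sigCounts (List.replicate n Sign.minus) = (n, 0) := by
  induction n with
  | zero => rfl
  | succ n ih => simp [List.replicate_succ, sigCounts, ih]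

theorem sigCounts_replicate_plus (n : ℕ) : sigCounts (List.replicate n Sign.plus) = (0, n) := by
  induction n with
  | zero => rfl
  | succ n ih => simp [List.replicate_succ, sigCounts, ih]

theorem sigCounts_sigBlock (γ : ℤ × ℤ → ℕ) (i k : ℤ) :
    sigCounts (sigBlock γ i k) = (γ (k, i), γ (k, i - 1)) := by
  simp [sigBlock, sigCounts_append, sigCounts_replicate_minus, sigCounts_replicate_plus]

section Decomposition

variable (γ γ' : ℤ × ℤ → ℕ) (i : ℤ)

-- `sigWord`, `sigSuffix` and `sigPrefix` coerce `List.range n` to `List ℤ`, which elaborates to a bind.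
theorem range_natCast (n : ℕ) : (List.range n : List ℤ) = (List.range n).map ((↑) : ℕ → ℤ) :=
  List.flatMap_pure_eq_map _ _

theorem sigSuffix_eq_nil {k : ℤ} (hk : i < k) : sigSuffix γ i k = [] := by
  rw [sigSuffix, show (i + 1 - k).toNat = 0 by omega]
  rfl

theorem sigSuffix_eq_sigBlock_append {k : ℤ} (hk : k ≤ i) :
    sigSuffix γ i k = sigBlock γ i k ++ sigSuffix γ i (k + 1) := by
  rw [sigSuffix, sigSuffix, range_natCast, range_natCast,
    show (i + 1 - k).toNat = (i + 1 - (k + 1)).toNat + 1 by omega, List.range_succ_eq_map]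
  simp only [List.map_cons, List.map_map, List.flatten_cons, Nat.cast_zero, add_zero]
  congr 3
  ext j
  simp only [Function.comp_apply]
  push_cast
  ring_nf

theorem sigPrefix_eq_nil {k : ℤ} (hk : k ≤ 1) : sigPrefix γ i k = [] := by
  rw [sigPrefix, show (k - 1).toNat = 0 by omega]
  rfl

theorem sigPrefix_add_one {k : ℤ} (hk : 1 ≤ k) :
    sigPrefix γ i (k + 1) = sigPrefix γ i k ++ sigBlock γ i k := by
  rw [sigPrefix, sigPrefix, range_natCast, range_natCast,
    show (k + 1 - 1).toNat = (k - 1).toNat + 1 by omega, List.range_succ]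
  simp only [List.map_append, List.map_cons, List.map_nil, List.flatten_append,
    List.flatten_cons, List.flatten_nil, List.append_nil]
  congr 2
  omega

theorem sigWord_eq_sigSuffix_one : sigWord γ i = sigSuffix γ i 1 := by
  simp [sigWord, sigSuffix]

theorem sigWord_eq_sigPrefix : sigWord γ i = sigPrefix γ i (i + 1) := by
  simp [sigWord, sigPrefix]

variable {γ γ' i}

theorem sigSuffix_congr {k : ℤ} (h : ∀ l, k ≤ l → sigBlock γ' i l = sigBlock γ i l) :
    sigSuffix γ' i k = sigSuffix γ i k := by
  rw [sigSuffix, sigSuffix, range_natCast]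
  congr 1
  refine List.map_congr_left fun j hj => h _ ?_
  obtain ⟨j, -, rfl⟩ := List.mem_map.1 hj
  omega

theorem sigPrefix_congr {k : ℤ} (h : ∀ l, l < k → sigBlock γ' i l = sigBlock γ i l) :
    sigPrefix γ' i k = sigPrefix γ i k := by
  rw [sigPrefix, sigPrefix, range_natCast]
  congr 1
  refine List.map_congr_left fun j hj => h _ ?_
  obtain ⟨j, hjr, rfl⟩ := List.mem_map.1 hj
  rw [List.mem_range] at hjr
  omega

end Decomposition

section Propagation

variable {γ γ' : ℤ × ℤ → ℕ} {i : ℤ}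

theorem fst_sigCounts_sigSuffix_one_eq_add_one {k : ℤ} (hk1 : 1 ≤ k) (hki : k ≤ i)
    (hblock : ∀ l < k, sigBlock γ' i l = sigBlock γ i l)
    (hcancel : ∀ l, 1 ≤ l → l < k → γ (l, i - 1) ≤ (sigCounts (sigSuffix γ i (l + 1))).1)
    (hk : (sigCounts (sigSuffix γ' i k)).1 = (sigCounts (sigSuffix γ i k)).1 + 1) :
    (sigCounts (sigSuffix γ' i 1)).1 = (sigCounts (sigSuffix γ i 1)).1 + 1 := by
  refine Int.leInductionDown (m := k)
    (motive := fun l _ => 1 ≤ l →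
      (sigCounts (sigSuffix γ' i l)).1 = (sigCounts (sigSuffix γ i l)).1 + 1)
    (fun _ => hk) (fun l hlk ih hl => ?_) 1 hk1 le_rfl
  have hcl := hcancel (l - 1) hl (by omega)
  rw [sub_add_cancel] at hcl
  simp only [sigSuffix_eq_sigBlock_append _ _ (show l - 1 ≤ i by omega), sub_add_cancel,
    hblock (l - 1) (by omega), sigCounts_append, sigCounts_sigBlock]
  have := ih (by omega)
  omega

theorem fst_sigCounts_sigPrefix_add_one_add_one_eq {k : ℤ} (hk1 : 1 ≤ k) (hki : k ≤ i + 1)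
    (hblock : ∀ l, k ≤ l → sigBlock γ' i l = sigBlock γ i l)
    (hcancel : ∀ l, k ≤ l → l ≤ i → γ (l, i) ≤ (sigCounts (sigPrefix γ i l)).2)
    (hk : (sigCounts (sigPrefix γ' i k)).1 + 1 = (sigCounts (sigPrefix γ i k)).1 ∧
      (sigCounts (sigPrefix γ i k)).2 ≤ (sigCounts (sigPrefix γ' i k)).2) :
    (sigCounts (sigPrefix γ' i (i + 1))).1 + 1 = (sigCounts (sigPrefix γ i (i + 1))).1 := by
  refine (Int.leInduction (m := k)
    (motive := fun l _ => l ≤ i + 1 →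
      (sigCounts (sigPrefix γ' i l)).1 + 1 = (sigCounts (sigPrefix γ i l)).1 ∧
      (sigCounts (sigPrefix γ i l)).2 ≤ (sigCounts (sigPrefix γ' i l)).2)
    (fun _ => hk) (fun l hkl ih hl => ?_) (i + 1) hki le_rfl).1
  have hcl := hcancel l hkl (by omega)
  simp only [sigPrefix_add_one _ _ (show 1 ≤ l by omega), hblock l hkl, sigCounts_append,
    sigCounts_sigBlock]
  have := ih (by omega)
  omega

theorem aCount_eq_zero_of_forall_le
    (hcancel : ∀ l, 1 ≤ l → l ≤ i → γ (l, i) ≤ (sigCounts (sigPrefix γ i l)).2) :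
    aCount γ i = 0 := by
  rw [aCount, count_minus_sigReduce, sigWord_eq_sigPrefix]
  rcases lt_or_ge i 0 with hi | hi
  · rw [sigPrefix_eq_nil _ _ (by omega)]
    rfl
  refine (Int.leInduction (m := 1)
    (motive := fun l _ => l ≤ i + 1 → (sigCounts (sigPrefix γ i l)).1 = 0)
    (fun _ => by rw [sigPrefix_eq_nil _ _ le_rfl]; rfl) (fun l hl ih hli => ?_) (i + 1)
    (by omega) le_rfl)
  have hcl := hcancel l hl (by omega)
  have := ih (by omega)
  simp only [sigPrefix_add_one _ _ hl, sigCounts_append, sigCounts_sigBlock]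
  omega

end Propagation

section Operators

variable (γ : ℤ × ℤ → ℕ) (i : ℤ)

theorem kPlus_spec (hi : 1 ≤ i) :
    1 ≤ kPlus γ i ∧ kPlus γ i ≤ i ∧
      (kPlus γ i < i →
        (sigCounts (sigSuffix γ i (kPlus γ i + 1))).1 < γ (kPlus γ i, i - 1)) ∧
      ∀ l, 1 ≤ l → l < kPlus γ i → γ (l, i - 1) ≤ (sigCounts (sigSuffix γ i (l + 1))).1 := by
  unfold kPlus
  dsimp only
  split_ifs with h
  · have hmem := Finset.min'_mem _ h
    rw [Finset.mem_filter, Finset.mem_Icc, count_minus_sigReduce] at hmem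
    refine ⟨hmem.1.1, by omega, fun _ => hmem.2, fun l hl hlt => ?_⟩
    by_contra! hc
    refine absurd (Finset.min'_le _ l ?_) (not_le.2 hlt)
    rw [Finset.mem_filter, Finset.mem_Icc, count_minus_sigReduce]
    exact ⟨⟨hl, by omega⟩, hc⟩
  · refine ⟨hi, le_rfl, fun h => (lt_irrefl i h).elim, fun l hl hlt => ?_⟩
    by_contra! hc
    exact h ⟨l, Finset.mem_filter.2
      ⟨Finset.mem_Icc.2 ⟨hl, by omega⟩, by rwa [count_minus_sigReduce]⟩⟩

theorem kMinus_spec (ha : 0 < aCount γ i) :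
    1 ≤ kMinus γ i ∧ kMinus γ i ≤ i ∧
      (sigCounts (sigPrefix γ i (kMinus γ i))).2 < γ (kMinus γ i, i) ∧
      ∀ l, kMinus γ i < l → l ≤ i → γ (l, i) ≤ (sigCounts (sigPrefix γ i l)).2 := by
  unfold kMinus
  dsimp only
  split_ifs with h
  · have hmem := Finset.max'_mem _ h
    rw [Finset.mem_filter, Finset.mem_Icc, count_plus_sigReduce] at hmem
    refine ⟨hmem.1.1, hmem.1.2, hmem.2, fun l hlt hl => ?_⟩
    by_contra! hc
    refine absurd (Finset.le_max' _ l ?_) (not_le.2 hlt)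
    rw [Finset.mem_filter, Finset.mem_Icc, count_plus_sigReduce]
    exact ⟨⟨by omega, hl⟩, hc⟩
  · refine absurd (aCount_eq_zero_of_forall_le fun l hl hli => ?_) ha.ne'
    by_contra! hc
    exact h ⟨l, Finset.mem_filter.2 ⟨Finset.mem_Icc.2 ⟨hl, hli⟩, by rwa [count_plus_sigReduce]⟩⟩

variable {γ i}

theorem sigBlock_gammaPlus_of_ne {l : ℤ} (hl : l ≠ kPlus γ i) :
    sigBlock (gammaPlus γ i) i l = sigBlock γ i l := by
  simp [sigBlock, gammaPlus, hl]

theorem sigBlock_gammaMinus_of_ne {l : ℤ} (hl : l ≠ kMinus γ i) :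
    sigBlock (gammaMinus γ i) i l = sigBlock γ i l := by
  simp [sigBlock, gammaMinus, hl]

variable (γ i)

theorem fst_sigCounts_sigSuffix_gammaPlus_kPlus (hi : 1 ≤ i) :
    (sigCounts (sigSuffix (gammaPlus γ i) i (kPlus γ i))).1 =
      (sigCounts (sigSuffix γ i (kPlus γ i))).1 + 1 := by
  obtain ⟨-, hki, hsurv, -⟩ := kPlus_spec γ i hi
  have hsuf : sigSuffix (gammaPlus γ i) i (kPlus γ i + 1) = sigSuffix γ i (kPlus γ i + 1) :=
    sigSuffix_congr fun l hl => sigBlock_gammaPlus_of_ne (by omega)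
  have hm : gammaPlus γ i (kPlus γ i, i) = γ (kPlus γ i, i) + 1 := by simp [gammaPlus]
  rw [sigSuffix_eq_sigBlock_append _ _ hki, sigSuffix_eq_sigBlock_append _ _ hki, hsuf]
  simp only [sigCounts_append, sigCounts_sigBlock, hm]
  rcases hki.lt_or_eq with hlt | heq
  · have := hsurv hlt
    simp only [gammaPlus, Prod.mk.injEq, sub_eq_self, one_ne_zero, and_false, ↓reduceIte, hlt,
      and_self]
    omega
  · rw [heq, sigSuffix_eq_nil γ i (lt_add_one i)]
    simp [sigCounts]

theorem sigCounts_sigPrefix_gammaMinus_kMinus_add_one (ha : 0 < aCount γ i) :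
    (sigCounts (sigPrefix (gammaMinus γ i) i (kMinus γ i + 1))).1 + 1 =
      (sigCounts (sigPrefix γ i (kMinus γ i + 1))).1 ∧
    (sigCounts (sigPrefix γ i (kMinus γ i + 1))).2 ≤
      (sigCounts (sigPrefix (gammaMinus γ i) i (kMinus γ i + 1))).2 := by
  obtain ⟨hk1, -, hsurv, -⟩ := kMinus_spec γ i ha
  have hpre : sigPrefix (gammaMinus γ i) i (kMinus γ i) = sigPrefix γ i (kMinus γ i) :=
    sigPrefix_congr fun l hl => sigBlock_gammaMinus_of_ne (by omega)
  rw [sigPrefix_add_one _ _ hk1, sigPrefix_add_one _ _ hk1, hpre]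
  simp only [sigCounts_append, sigCounts_sigBlock]
  by_cases hlt : kMinus γ i < i <;>
    simp only [gammaMinus, ↓reduceIte, Prod.mk.injEq, sub_eq_self, one_ne_zero, and_false, hlt,
      and_self, and_true] <;>
    omega

theorem aCount_gammaPlus (hi : 1 ≤ i) : aCount (gammaPlus γ i) i = aCount γ i + 1 := by
  obtain ⟨hk1, hki, -, hcancel⟩ := kPlus_spec γ i hi
  simp only [aCount, count_minus_sigReduce, sigWord_eq_sigSuffix_one]
  exact fst_sigCounts_sigSuffix_one_eq_add_one hk1 hki
    (fun l hl => sigBlock_gammaPlus_of_ne hl.ne) hcancel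
    (fst_sigCounts_sigSuffix_gammaPlus_kPlus γ i hi)

theorem aCount_gammaMinus (ha : 0 < aCount γ i) :
    aCount (gammaMinus γ i) i = aCount γ i - 1 := by
  obtain ⟨hk1, hki, -, hcancel⟩ := kMinus_spec γ i ha
  have := fst_sigCounts_sigPrefix_add_one_add_one_eq (by omega) (by omega)
    (fun l hl => sigBlock_gammaMinus_of_ne (by omega)) (fun l hl => hcancel l (by omega))
    (sigCounts_sigPrefix_gammaMinus_kMinus_add_one γ i ha)
  simp only [aCount, count_minus_sigReduce, sigWord_eq_sigPrefix] at this ⊢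
  omega

end Operators

theorem stmt17_general (i : ℤ) (hi1 : 1 ≤ i)
    (γ : ℤ × ℤ → ℕ) :
    aCount (gammaPlus γ i) i = aCount γ i + 1 ∧
    (0 < aCount γ i → aCount (gammaMinus γ i) i = aCount γ i - 1) :=
  ⟨aCount_gammaPlus γ i hi1, aCount_gammaMinus γ i⟩

theorem stmt17 (n i : ℤ) (hn : 1 ≤ n) (hi1 : 1 ≤ i) (hin : i ≤ n)
    (γ : ℤ × ℤ → ℕ)
    (hsupp : ∀ p : ℤ × ℤ, γ p ≠ 0 → 1 ≤ p.1 ∧ p.1 ≤ p.2 ∧ p.2 ≤ n) :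
    aCount (gammaPlus γ i) i = aCount γ i + 1 ∧
    (0 < aCount γ i → aCount (gammaMinus γ i) i = aCount γ i - 1) :=
  stmt17_general i hi1 γ
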